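/- arXiv:2204.01938 — 2 statements merged into one kernel-verified Lean document; each statement's English description precedes it below -/
import Mathlib

section
/- Every digraph G on n vertices satisfies π(G) ≤ n·√(τ*(G)), where π(G) is the directed surplus and τ*(G) is the maximum of e(A,B) − e(B,A) over disjoint vertex subsets A, B. -/
open Finset

section FASDefs

variable {V : Type*} [Fintype V] [DecidableEq V]

/-- Existence of a directed cycle of length `l` in the digraph with edge relation `E`. -/
def hasDirCycleLen (E : V → V → Prop) (l : ℕ) : Prop :=
  ∃ (hl : 0 < l) (v : Fin l → V),
    ∀ i : Fin l, E (v i) (v ⟨(i.1 + 1) % l, Nat.mod_lt _ hl⟩)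

/-- Existence of a directed cycle (of any length). -/
def hasDirCycle (E : V → V → Prop) : Prop := ∃ l : ℕ, hasDirCycleLen E l

/-- `S` is a feedback arc set of the digraph with edge relation `E`. -/
def IsFAS (E : V → V → Prop) (S : Finset (V × V)) : Prop :=
  (∀ e ∈ S, E e.1 e.2) ∧ ¬ hasDirCycle (fun a b => E a b ∧ (a, b) ∉ S)

/-- `beta E` is the minimum size of a feedback arc set. -/
noncomputable def beta (E : V → V → Prop) : ℕ :=
  sInf {k | ∃ S : Finset (V × V), IsFAS E S ∧ S.card = k}

/-- Number of directed edges. -/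
def edgeCount (E : V → V → Prop) [DecidableRel E] : ℕ :=
  ((univ : Finset (V × V)).filter (fun p => E p.1 p.2)).card

/-- `eAB E A B` is the number of directed edges from `A` to `B`. -/
def eAB (E : V → V → Prop) [DecidableRel E] (A B : Finset V) : ℕ :=
  ((A ×ˢ B).filter (fun p => E p.1 p.2)).card

/-- Directional discrepancy `τ(G)`: max of `e(A,B) - e(B,A)` over all pairs of subsets. -/
noncomputable def tau (E : V → V → Prop) [DecidableRel E] : ℤ :=
  Finset.sup' (univ : Finset (Finset V × Finset V)) ⟨(∅, ∅), mem_univ _⟩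
    fun AB => (eAB E AB.1 AB.2 : ℤ) - (eAB E AB.2 AB.1 : ℤ)

/-- `τ*(G)`: max of `e(A,B) - e(B,A)` over disjoint pairs of subsets. -/
noncomputable def tauStar (E : V → V → Prop) [DecidableRel E] : ℤ :=
  Finset.sup' ((univ : Finset (Finset V × Finset V)).filter fun AB => Disjoint AB.1 AB.2)
    ⟨(∅, ∅), by simp⟩
    fun AB => (eAB E AB.1 AB.2 : ℤ) - (eAB E AB.2 AB.1 : ℤ)

/-- `τ_⊔(G)`: max of `e(A,B) - e(B,A)` over partitions `V = A ⊔ B`. -/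
noncomputable def tauPart (E : V → V → Prop) [DecidableRel E] : ℤ :=
  Finset.sup' (univ : Finset (Finset V)) ⟨∅, mem_univ _⟩
    fun A => (eAB E A Aᶜ : ℤ) - (eAB E Aᶜ A : ℤ)

/-- Directed surplus `π(G) = m/2 - β(G)`. -/
noncomputable def surplus (E : V → V → Prop) [DecidableRel E] : ℝ :=
  (edgeCount E : ℝ) / 2 - (beta E : ℝ)

/-- Indegree `d⁺(v)`. -/
def inDeg (E : V → V → Prop) [DecidableRel E] (v : V) : ℕ :=
  (univ.filter fun w => E w v).card

/-- Outdegree `d⁻(v)`. -/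
def outDeg (E : V → V → Prop) [DecidableRel E] (v : V) : ℕ :=
  (univ.filter fun w => E v w).card

end FASDefs

/-- Number of labeled copies of the digraph `(W, EB)` in the digraph `(V, E)`:
injective maps preserving directed edges. -/
noncomputable def NL {W V : Type*} (EB : W → W → Prop) (E : V → V → Prop) : ℕ :=
  Nat.card {f : W ↪ V // ∀ a b, EB a b → E (f a) (f b)}

/-!
Take a minimum feedback arc set. The remaining arcs are acyclic, so some ordering of the vertices
has at most `β(G)` non-forward arcs, and `m - 2β(G)` is at most the number of forward arcs minus
the number of backward ones. Cut the ordering into blocks of `s = ⌊√τ*⌋ + 1` consecutive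
vertices. At most `n (s - 1)` forward arcs stay inside a block; the arcs between blocks, grouped
by the block of their earlier endpoint, contribute at most `τ*` per block, hence at most
`(n / s) τ*` in total. Both terms are at most `n √τ*`.
-/
open Function

section Cycles

variable {V : Type*}

lemma Relation.TransGen.exists_walk {R : V → V → Prop} {a b : V} (h : Relation.TransGen R a b) :
    ∃ l > 0, ∃ f : ℕ → V, f 0 = a ∧ f l = b ∧ ∀ k < l, R (f k) (f (k + 1)) := by
  induction h with
  | @single b hab => exact ⟨1, one_pos, fun k => if k = 0 then a else b, rfl, rfl, by simpa⟩
  | @tail b c _ hbc ih =>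
    obtain ⟨l, hl, f, hf0, hfl, hf⟩ := ih
    refine ⟨l + 1, l.succ_pos, fun k => if k ≤ l then f k else c, by simpa, by simp, fun k hk => ?_⟩
    rcases Nat.lt_succ_iff_lt_or_eq.1 hk with hk | rfl
    · simpa [hk.le, Nat.succ_le_of_lt hk] using hf k hk
    · simpa [hfl] using hbc

lemma hasDirCycle_of_transGen_self {R : V → V → Prop} {a : V} (h : Relation.TransGen R a a) :
    hasDirCycle R := by
  obtain ⟨l, hl, f, hf0, hfl, hf⟩ := h.exists_walk
  refine ⟨l, hl, fun i => f i, fun i => ?_⟩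
  have hnext : f ((i + 1) % l) = f (i + 1) := by
    rcases (Nat.add_one_le_of_lt i.2).lt_or_eq with hi | hi
    · rw [Nat.mod_eq_of_lt hi]
    · rw [hi, Nat.mod_self, hf0, hfl]
  simpa only [hnext] using hf i i.2

lemma exists_equiv_fin_lt_of_acyclic [Fintype V] {R : V → V → Prop}
    (h : ∀ a, ¬ Relation.TransGen R a a) :
    ∃ e : V ≃ Fin (Fintype.card V), ∀ a b, R a b → e a < e b := by
  have : IsStrictOrder V (Relation.TransGen R) :=
    { irrefl := h, trans := fun _ _ _ => Relation.TransGen.trans }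
  let := partialOrderOfSO (Relation.TransGen R)
  let : Fintype (LinearExtension V) := inferInstanceAs (Fintype V)
  let e := (Fintype.orderIsoFinOfCardEq (LinearExtension V) rfl).symm
  refine ⟨e.toEquiv, fun a b hab => e.lt_iff_lt.2 ?_⟩
  exact (toLinearExtension.monotone.strictMono_of_injective fun _ _ h => h)
    (Relation.TransGen.single hab : a < b)

end Cycles

lemma card_filter_lt_and_div_eq_le {V : Type*} [Fintype V] {pos : V → ℕ} (hinj : Injective pos)
    {s : ℕ} (hs : 0 < s) :
    #((univ : Finset (V × V)).filter fun p => pos p.1 < pos p.2 ∧ pos p.1 / s = pos p.2 / s)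
      ≤ Fintype.card V * (s - 1) := by
  rw [← card_univ, ← card_range (s - 1), ← card_product]
  refine card_le_card_of_injOn (fun p => (p.1, pos p.2 - pos p.1 - 1)) (fun p hp => ?_)
    fun p hp q hq hpq => ?_
  · obtain ⟨hlt, hdiv⟩ := (mem_filter.1 hp).2
    have h1 := Nat.div_add_mod (pos p.1) s
    have h2 := Nat.div_add_mod (pos p.2) s
    have h3 := Nat.mod_lt (pos p.2) hs
    rw [hdiv] at h1
    simp only [coe_product, coe_univ, coe_range, Set.mem_prod, Set.mem_univ, Set.mem_Iio, true_and]
    omega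
  · have hp' := (mem_filter.1 hp).2.1
    have hq' := (mem_filter.1 hq).2.1
    obtain ⟨h1, h2⟩ := Prod.mk.inj hpq
    exact Prod.ext h1 (hinj (by rw [h1] at hp' h2; omega))

lemma mul_natSqrt_add_div_natSqrt_succ_mul_le (n t : ℕ) :
    (n * Nat.sqrt t + ((n - 1) / (Nat.sqrt t + 1) : ℕ) * t : ℝ) ≤ 2 * n * √t := by
  set s := Nat.sqrt t + 1
  set D := (n - 1) / s
  have hsqrt_le : (Nat.sqrt t : ℝ) ≤ √t := Real.nat_sqrt_le_real_sqrt
  have hle_s : √t ≤ s := by push_cast [s]; exact Real.real_sqrt_le_nat_sqrt_succ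
  have hDs : (D * s : ℝ) ≤ n := by exact_mod_cast (Nat.div_mul_le_self _ _).trans (Nat.sub_le _ _)
  have ht : (t : ℝ) = √t * √t := (Real.mul_self_sqrt t.cast_nonneg).symm
  have hD : (D * t : ℝ) ≤ n * √t := calc
    (D * t : ℝ) = D * √t * √t := by rw [mul_assoc, ← ht]
    _ ≤ D * s * √t := by gcongr
    _ ≤ n * √t := by gcongr
  have hn : (n * Nat.sqrt t : ℝ) ≤ n * √t := by gcongr
  linarith

section Digraph

variable {V : Type*} [Fintype V] (E : V → V → Prop) [DecidableRel E]

def arcs : Finset (V × V) := univ.filter fun p => E p.1 p.2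

lemma isFAS_arcs : IsFAS E (arcs E) := by
  refine ⟨fun _ he => (mem_filter.1 he).2, ?_⟩
  rintro ⟨_, hl, _, hv⟩
  exact (hv ⟨0, hl⟩).2 (mem_filter.2 ⟨mem_univ _, (hv ⟨0, hl⟩).1⟩)

lemma exists_injective_card_backward_le_beta :
    ∃ pos : V → ℕ, Injective pos ∧ (∀ v, pos v < Fintype.card V) ∧
      #((arcs E).filter fun p => ¬ pos p.1 < pos p.2) ≤ beta E := by
  obtain ⟨S, ⟨-, hacyclic⟩, hS⟩ : ∃ S, IsFAS E S ∧ #S = beta E :=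
    Nat.sInf_mem (s := {k | ∃ S, IsFAS E S ∧ #S = k}) ⟨_, arcs E, isFAS_arcs E, rfl⟩
  obtain ⟨e, he⟩ := exists_equiv_fin_lt_of_acyclic (R := fun a b => E a b ∧ (a, b) ∉ S)
    fun _ h => hacyclic (hasDirCycle_of_transGen_self h)
  refine ⟨fun v => e v, Fin.val_injective.comp e.injective, fun v => (e v).2,
    hS ▸ card_le_card fun p hp => ?_⟩
  obtain ⟨hp, hback⟩ := mem_filter.1 hp
  by_contra hpS
  exact hback (he p.1 p.2 ⟨(mem_filter.1 hp).2, hpS⟩)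

variable [DecidableEq V]

lemma eAB_eq_card_filter_arcs (A B : Finset V) :
    eAB E A B = #((arcs E).filter fun p => p.1 ∈ A ∧ p.2 ∈ B) := by
  unfold eAB arcs
  rw [filter_filter]
  exact congrArg card <| by ext p; simp [and_comm]

lemma le_tauStar {A B : Finset V} (h : Disjoint A B) :
    (eAB E A B : ℤ) - eAB E B A ≤ tauStar E :=
  le_sup' (fun AB : Finset V × Finset V => (eAB E AB.1 AB.2 : ℤ) - eAB E AB.2 AB.1)
    (mem_filter.2 ⟨mem_univ (A, B), h⟩)

lemma tauStar_nonneg : 0 ≤ tauStar E := by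
  simpa [eAB] using le_tauStar E (disjoint_empty_left ∅)

/- A climbing arc is counted at the level of its tail, a descending one at the level of its head;
level `k` and the levels above it form a disjoint pair. -/
lemma card_arcs_up_sub_card_arcs_down_le (c : V → ℕ) {D : ℕ} (hc : ∀ v, c v ≤ D) :
    (#((arcs E).filter fun p => c p.1 < c p.2) : ℤ) - #((arcs E).filter fun p => c p.2 < c p.1)
      ≤ D * tauStar E := by
  set level : ℕ → Finset V := fun k => univ.filter fun v => c v = k
  set above : ℕ → Finset V := fun k => univ.filter fun v => k < c v
  have hup : #((arcs E).filter fun p => c p.1 < c p.2) =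
      ∑ k ∈ range D, eAB E (level k) (above k) := by
    rw [card_eq_sum_card_fiberwise (f := fun p => c p.1) (t := range D) fun p hp =>
      mem_range.2 ((mem_filter.1 hp).2.trans_le (hc p.2))]
    refine sum_congr rfl fun k _ => ?_
    rw [eAB_eq_card_filter_arcs, filter_filter]
    exact congrArg card <| filter_congr fun p _ => by
      simp only [level, above, mem_filter, mem_univ, true_and]; omega
  have hdown : #((arcs E).filter fun p => c p.2 < c p.1) =
      ∑ k ∈ range D, eAB E (above k) (level k) := by
    rw [card_eq_sum_card_fiberwise (f := fun p => c p.2) (t := range D) fun p hp =>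
      mem_range.2 ((mem_filter.1 hp).2.trans_le (hc p.1))]
    refine sum_congr rfl fun k _ => ?_
    rw [eAB_eq_card_filter_arcs, filter_filter]
    exact congrArg card <| filter_congr fun p _ => by
      simp only [level, above, mem_filter, mem_univ, true_and]; omega
  have hdisj : ∀ k, Disjoint (level k) (above k) := fun k =>
    disjoint_filter.2 fun v _ hv => hv.symm ▸ lt_irrefl k
  rw [hup, hdown]
  push_cast
  rw [← sum_sub_distrib]
  simpa using sum_le_card_nsmul (range D) _ _ fun k _ => le_tauStar E (hdisj k)

lemma edgeCount_le_two_mul_card_backward_add {pos : V → ℕ} (hinj : Injective pos)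
    (hpos : ∀ v, pos v < Fintype.card V) {s : ℕ} (hs : 0 < s) :
    (edgeCount E : ℤ) ≤ 2 * #((arcs E).filter fun p => ¬ pos p.1 < pos p.2)
      + Fintype.card V * (s - 1 : ℕ) + ((Fintype.card V - 1) / s : ℕ) * tauStar E := by
  set n := Fintype.card V
  set fwd := (arcs E).filter fun p => pos p.1 < pos p.2
  set bwd := (arcs E).filter fun p => ¬ pos p.1 < pos p.2
  set same := (arcs E).filter fun p => pos p.1 < pos p.2 ∧ pos p.1 / s = pos p.2 / s
  set up := (arcs E).filter fun p => pos p.1 / s < pos p.2 / s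
  set down := (arcs E).filter fun p => pos p.2 / s < pos p.1 / s
  have hsplit : #fwd + #bwd = edgeCount E := card_filter_add_card_filter_not _
  have hfwd : #fwd ≤ #same + #up := by
    refine (card_le_card fun p hp => ?_).trans (card_union_le same up)
    obtain ⟨hp, hlt⟩ := mem_filter.1 hp
    rcases (Nat.div_le_div_right (c := s) hlt.le).eq_or_lt with heq | hdiv
    · exact mem_union_left _ (mem_filter.2 ⟨hp, hlt, heq⟩)
    · exact mem_union_right _ (mem_filter.2 ⟨hp, hdiv⟩)
  have hsame : #same ≤ n * (s - 1) :=
    (card_le_card (filter_subset_filter _ (subset_univ _))).trans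
      (card_filter_lt_and_div_eq_le hinj hs)
  have hdown : #down ≤ #bwd := card_le_card fun p hp => by
    obtain ⟨hp, hdiv⟩ := mem_filter.1 hp
    exact mem_filter.2 ⟨hp, fun hlt => (Nat.div_le_div_right hlt.le).not_gt hdiv⟩
  have hcross := card_arcs_up_sub_card_arcs_down_le E (fun v => pos v / s) (D := (n - 1) / s)
    fun v => Nat.div_le_div_right (Nat.le_sub_one_of_lt (hpos v))
  have hsame' : (#same : ℤ) ≤ n * (s - 1 : ℕ) := by exact_mod_cast hsame
  zify at hsplit hfwd hdown
  linarith

lemma two_mul_surplus_le {s : ℕ} (hs : 0 < s) :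
    2 * surplus E ≤ Fintype.card V * (s - 1 : ℕ) + ((Fintype.card V - 1) / s : ℕ) * tauStar E := by
  obtain ⟨pos, hinj, hpos, hbwd⟩ := exists_injective_card_backward_le_beta E
  have h := edgeCount_le_two_mul_card_backward_add E hinj hpos hs
  have hbwd' : (#((arcs E).filter fun p => ¬ pos p.1 < pos p.2) : ℝ) ≤ beta E := by
    exact_mod_cast hbwd
  have h' := (Int.cast_le (R := ℝ)).2 h
  simp only [Int.cast_add, Int.cast_mul, Int.cast_natCast, Int.cast_ofNat] at h'
  unfold surplus
  linarith

end Digraph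

/-- `π(G) ≤ n √(τ*(G))`. -/
theorem stmt10 {V : Type*} [Fintype V] [DecidableEq V] (E : V → V → Prop) [DecidableRel E] :
    surplus E ≤ (Fintype.card V : ℝ) * Real.sqrt ((tauStar E : ℝ)) := by
  obtain ⟨t, ht⟩ := Int.eq_ofNat_of_zero_le (tauStar_nonneg E)
  have h := two_mul_surplus_le E (Nat.add_one_pos (Nat.sqrt t))
  have hest := mul_natSqrt_add_div_natSqrt_succ_mul_le (Fintype.card V) t
  rw [ht, Nat.add_sub_cancel] at h
  rw [ht]
  push_cast at h ⊢
  linarith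
end

section
/- Suppose that every r-free digraph G on n vertices satisfies β(G) = O(1) (bounded by an absolute constant). Then r = Ω(n). More precisely, for any integer r ≥ 3 with r+1 dividing n, there is an r-free digraph G on n vertices with β(G) ≥ n²/(r+1)², so if n²/(r+1)² ≤ C then r+1 ≥ n/√C. -/
open Finset

/-! The witness is the balanced blowup of the directed `(r+1)`-cycle. Its first coordinate
grows by one along every edge, so all its cycles have length divisible by `r + 1`. Every
transversal `(r+1)`-cycle must meet a feedback arc set `S`, and an edge of `S` together with
the other `r - 1` coordinates of the transversal determines it, so
`m ^ (r+1) ≤ |S| * m ^ (r-1)`, i.e. `|S| ≥ m ^ 2` for `m = n / (r+1)`. -/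

theorem natCast_eq_zero_of_hasDirCycleLen {V R : Type*} [AddGroupWithOne R]
    {E : V → V → Prop} (φ : V → R) (hφ : ∀ a b, E a b → φ b = φ a + 1) {l : ℕ}
    (h : hasDirCycleLen E l) : (l : R) = 0 := by
  obtain ⟨hl, v, hv⟩ := h
  have hstep : ∀ j (hj : j < l), φ (v ⟨j, hj⟩) = φ (v ⟨0, hl⟩) + j := by
    intro j
    induction j with
    | zero => intro; simp
    | succ j ih =>
      intro hj
      have hnext : v ⟨(j + 1) % l, Nat.mod_lt _ hl⟩ = v ⟨j + 1, hj⟩ :=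
        congrArg v (Fin.ext (Nat.mod_eq_of_lt hj))
      rw [← hnext, hφ _ _ (hv ⟨j, by omega⟩), ih, Nat.cast_succ, add_assoc]
  have hlast : v ⟨(l - 1 + 1) % l, Nat.mod_lt _ hl⟩ = v ⟨0, hl⟩ :=
    congrArg v (Fin.ext (by simp [Nat.sub_add_cancel hl]))
  have hcycle := hφ _ _ (hv ⟨l - 1, by omega⟩)
  rwa [hlast, hstep (l - 1), add_assoc, left_eq_add, ← Nat.cast_add_one,
    Nat.sub_add_cancel hl] at hcycle

theorem hasDirCycleLen_of_zmod {V : Type*} {E : V → V → Prop} {k : ℕ} [NeZero k]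
    (w : ZMod k → V) (hw : ∀ i, E (w i) (w (i + 1))) : hasDirCycleLen E k :=
  ⟨Nat.pos_of_neZero k, fun i => w i.1, fun i => by simpa [ZMod.natCast_mod] using hw i.1⟩

theorem le_beta {V : Type*} [Fintype V] {E : V → V → Prop} {b : ℕ}
    (h : ∀ S, IsFAS E S → b ≤ S.card) : b ≤ beta E := by
  classical
  have hedges : IsFAS E (univ.filter fun p : V × V => E p.1 p.2) :=
    ⟨fun e he => (mem_filter.mp he).2,
      fun ⟨_, hl, _, hv⟩ => (hv ⟨0, hl⟩).2 (mem_filter.mpr ⟨mem_univ _, (hv ⟨0, hl⟩).1⟩)⟩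
  exact le_csInf ⟨_, _, hedges, rfl⟩ (by rintro _ ⟨S, hS, rfl⟩; exact h S hS)

theorem ZMod.eq_zero_or_eq_one_or_eq_natCast_add_two {k : ℕ} [NeZero k] (j : ZMod k) :
    j = 0 ∨ j = 1 ∨ ∃ t : Fin (k - 2), j = (t : ℕ) + 2 := by
  rw [← ZMod.natCast_zmod_val j]
  have hlt := ZMod.val_lt j
  generalize j.val = v at hlt
  rcases v with _ | _ | t
  · simp
  · simp
  · exact Or.inr (Or.inr ⟨⟨t, by omega⟩, by push_cast; ring⟩)

def cycleBlowup (k m : ℕ) (p q : ZMod k × Fin m) : Prop := q.1 = p.1 + 1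

section CycleBlowup

variable {k m : ℕ}

theorem dvd_of_hasDirCycleLen_cycleBlowup {l : ℕ} (h : hasDirCycleLen (cycleBlowup k m) l) :
    k ∣ l :=
  (ZMod.natCast_eq_zero_iff l k).mp
    (natCast_eq_zero_of_hasDirCycleLen Prod.fst (fun _ _ hab => hab) h)

theorem not_hasDirCycleLen_cycleBlowup {l : ℕ} (hl : 0 < l) (hlk : l < k) :
    ¬ hasDirCycleLen (cycleBlowup k m) l :=
  fun h => absurd (Nat.le_of_dvd hl (dvd_of_hasDirCycleLen_cycleBlowup h)) (by omega)

theorem IsFAS.exists_transversal_mem [NeZero k] {S : Finset ((ZMod k × Fin m) × (ZMod k × Fin m))}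
    (hS : IsFAS (cycleBlowup k m) S) (f : ZMod k → Fin m) :
    ∃ i, ((i, f i), (i + 1, f (i + 1))) ∈ S := by
  by_contra! h
  exact hS.2 ⟨k, hasDirCycleLen_of_zmod (fun i => (i, f i)) fun i => ⟨rfl, h i⟩⟩

theorem sq_le_card_of_isFAS_cycleBlowup [NeZero k] (hk : 2 ≤ k)
    {S : Finset ((ZMod k × Fin m) × (ZMod k × Fin m))} (hS : IsFAS (cycleBlowup k m) S) :
    m ^ 2 ≤ S.card := by
  choose i hi using hS.exists_transversal_mem
  let Φ : (ZMod k → Fin m) → S × (Fin (k - 2) → Fin m) :=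
    fun f => (⟨_, hi f⟩, fun t => f (i f + ((t : ℕ) + 2)))
  have hΦ : Function.Injective Φ := by
    intro f g hfg
    simp only [Φ, Prod.mk.injEq, Subtype.mk.injEq, funext_iff] at hfg
    obtain ⟨⟨⟨hi, hf0⟩, -, hf1⟩, hrest⟩ := hfg
    funext j
    rw [← add_sub_cancel (i g) j]
    obtain h | h | ⟨t, h⟩ := (j - i g).eq_zero_or_eq_one_or_eq_natCast_add_two
    · rw [h, add_zero, ← hi, hf0, hi]
    · rw [h, ← hi, hf1, hi]
    · rw [h, ← hi, hrest t, hi]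
  have hcard := Fintype.card_le_of_injective Φ hΦ
  simp only [Fintype.card_fun, Fintype.card_prod, Fintype.card_coe, ZMod.card,
    Fintype.card_fin] at hcard
  rcases Nat.eq_zero_or_pos m with rfl | hm
  · simp
  refine Nat.le_of_mul_le_mul_right ?_ (pow_pos hm (k - 2))
  rwa [← pow_add, Nat.add_sub_cancel' hk]

end CycleBlowup

theorem div_sqrt_le_of_sq_div_sq_le {x y C : ℝ} (hy : 0 < y) (h : x ^ 2 / y ^ 2 ≤ C) :
    x / √C ≤ y := by
  rcases (Real.sqrt_nonneg C).eq_or_lt with h0 | hpos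
  · simp [← h0, hy.le]
  have hxy : x / y ≤ √C := Real.le_sqrt_of_sq_le (by rwa [div_pow])
  rw [div_le_iff₀ hy] at hxy
  rw [div_le_iff₀ hpos]
  linarith

/-- for `r ≥ 3` with `(r+1) ∣ n` there is an `r`-free digraph on `n` vertices
with `β(G) ≥ n²/(r+1)²`; hence if `n²/(r+1)² ≤ C` then `r + 1 ≥ n/√C`. -/
theorem stmt16 (r n : ℕ) (hr : 3 ≤ r) (hdvd : (r + 1) ∣ n) :
    (∃ (V : Type) (i1 : Fintype V) (i2 : DecidableEq V) (E : V → V → Prop),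
      Fintype.card V = n ∧
      (∀ l : ℕ, 1 ≤ l → l ≤ r → ¬ hasDirCycleLen E l) ∧
      n ^ 2 / (r + 1) ^ 2 ≤ beta E)
    ∧ ∀ C : ℝ, 0 < C → (n : ℝ) ^ 2 / ((r : ℝ) + 1) ^ 2 ≤ C →
        (n : ℝ) / Real.sqrt C ≤ (r : ℝ) + 1 := by
  obtain ⟨m, rfl⟩ := hdvd
  refine ⟨⟨ZMod (r + 1) × Fin m, inferInstance, inferInstance, cycleBlowup (r + 1) m,
      by simp, fun l hl hlr => not_hasDirCycleLen_cycleBlowup hl (by omega), ?_⟩,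
    fun C _ h => div_sqrt_le_of_sq_div_sq_le (by positivity) h⟩
  rw [mul_pow, Nat.mul_div_cancel_left _ (by positivity)]
  exact le_beta fun S hS => sq_le_card_of_isFAS_cycleBlowup (by omega) hS
end
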